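/- arXiv:1108.0239 — 3 statements merged into one kernel-verified Lean document; each statement's English description precedes it below -/
import Mathlib

section
/- Under the weak Lyapunov condition (common symmetric positive-definite P with P - S_kᵀPS_k ≥ 0 for k = 1,…,K), let Q_σ = √(MᵀPM) for any M ∈ ω(σ) (well-defined independently of M). Then for every x₀ ∈ ℝ^d, lim_{n→∞} ‖S_{σ(n)}⋯S_{σ(1)}x₀‖_P = ‖Q_σ x₀‖₂, where ‖·‖₂ is the Euclidean norm. In particular, the orbit of x₀ tends to 0 if and only if x₀ ∈ ker(Q_σ), and σ is asymptotically stable for the system if and only if Q_σ = 0. -/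
/-!
The quadratic form `V x = xᵀ P x` is non-increasing along the orbit by the Lyapunov
inequalities and bounded below, so `V (S_{σ(n)} ⋯ S_{σ(1)} x₀)` converges; along a subsequence
whose products converge to `M` the limit is `x₀ᵀ Mᵀ P M x₀ = ‖Q x₀‖²`. Since `P` is positive
definite, `V xₙ → 0` exactly when `xₙ → 0`.
-/

open Matrix Filter
open scoped ENNReal

open scoped ComplexOrder in
noncomputable def Matrix.PosSemidef.sqrt {n 𝕜 : Type*} [Fintype n] [RCLike 𝕜] [DecidableEq n]
    {A : Matrix n n 𝕜} (hA : A.PosSemidef) : Matrix n n 𝕜 :=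
  hA.1.eigenvectorUnitary.1 * diagonal ((↑) ∘ (Real.sqrt ·) ∘ hA.1.eigenvalues) *
    (star hA.1.eigenvectorUnitary : Matrix n n 𝕜)

noncomputable def Pnorm {d : ℕ} (P : Matrix (Fin d) (Fin d) ℝ) (x : Fin d → ℝ) : ℝ :=
  Real.sqrt (x ⬝ᵥ P.mulVec x)

noncomputable def PopNorm {d : ℕ} (P A : Matrix (Fin d) (Fin d) ℝ) : ℝ :=
  sSup ((fun x => Pnorm P (A.mulVec x)) '' {x | Pnorm P x = 1})

noncomputable def PcoNorm {d : ℕ} (P A : Matrix (Fin d) (Fin d) ℝ) : ℝ :=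
  sInf ((fun x => Pnorm P (A.mulVec x)) '' {x | Pnorm P x = 1})

noncomputable def specRad {d : ℕ} (A : Matrix (Fin d) (Fin d) ℝ) : ℝ≥0∞ :=
  spectralRadius ℂ (A.map Complex.ofReal)

def prodsW {d K : ℕ} (S : Fin K → Matrix (Fin d) (Fin d) ℝ) (σ : ℕ → Fin K) :
    ℕ → Matrix (Fin d) (Fin d) ℝ
  | 0 => 1
  | n + 1 => S (σ n) * prodsW S σ n

def omegaSet {d K : ℕ} (S : Fin K → Matrix (Fin d) (Fin d) ℝ) (σ : ℕ → Fin K) :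
    Set (Matrix (Fin d) (Fin d) ℝ) :=
  {M | ∃ φ : ℕ → ℕ, StrictMono φ ∧ Tendsto (fun i => prodsW S σ (φ i)) atTop (nhds M)}

namespace Matrix

section Sqrt

open scoped ComplexOrder

variable {n 𝕜 : Type*} [Fintype n] [DecidableEq n] [RCLike 𝕜]

lemma PosSemidef.posSemidef_sqrt {A : Matrix n n 𝕜} (hA : A.PosSemidef) :
    hA.sqrt.PosSemidef := by
  have := (PosSemidef.diagonal (d := ((↑) ∘ (Real.sqrt ·) ∘ hA.1.eigenvalues : n → 𝕜))
    fun i => RCLike.ofReal_nonneg.mpr (Real.sqrt_nonneg _)).mul_mul_conjTranspose_same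
      hA.1.eigenvectorUnitary.1
  simpa [PosSemidef.sqrt, star_eq_conjTranspose] using this

lemma PosSemidef.sqrt_mul_self {A : Matrix n n 𝕜} (hA : A.PosSemidef) :
    hA.sqrt * hA.sqrt = A := by
  let U : Matrix n n 𝕜 := hA.1.eigenvectorUnitary
  let E : Matrix n n 𝕜 := diagonal ((↑) ∘ Real.sqrt ∘ hA.1.eigenvalues)
  have hEE : E * E = diagonal ((↑) ∘ hA.1.eigenvalues) := by
    rw [diagonal_mul_diagonal]
    congr! with i
    simp [← RCLike.ofReal_mul, Real.mul_self_sqrt (hA.eigenvalues_nonneg i)]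
  have hU : star U * U = 1 := Unitary.coe_star_mul_self hA.1.eigenvectorUnitary
  have h := hA.1.spectral_theorem
  rw [Unitary.conjStarAlgAut_apply] at h
  calc hA.sqrt * hA.sqrt = U * E * (star U * U) * E * star U := by
        simp only [PosSemidef.sqrt, Matrix.mul_assoc]; rfl
    _ = A := by rw [hU, Matrix.mul_one, Matrix.mul_assoc U, hEE]; exact h.symm

end Sqrt

variable {n : Type*} [Fintype n]

lemma dotProduct_transpose_mul_mul_mulVec {R : Type*} [CommSemiring R] (A B : Matrix n n R)
    (x : n → R) : x ⬝ᵥ (Aᵀ * B * A) *ᵥ x = (A *ᵥ x) ⬝ᵥ B *ᵥ (A *ᵥ x) := by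
  rw [← mulVec_mulVec, ← mulVec_mulVec, dotProduct_mulVec, vecMul_transpose]

variable [DecidableEq n]

lemma PosSemidef.transpose_sqrt {A : Matrix n n ℝ} (hA : A.PosSemidef) : hA.sqrtᵀ = hA.sqrt :=
  hA.posSemidef_sqrt.1

lemma PosSemidef.dotProduct_mulVec_eq_sqrt {A : Matrix n n ℝ} (hA : A.PosSemidef) (x : n → ℝ) :
    x ⬝ᵥ A *ᵥ x = (hA.sqrt *ᵥ x) ⬝ᵥ (hA.sqrt *ᵥ x) := by
  calc x ⬝ᵥ A *ᵥ x = x ⬝ᵥ (hA.sqrtᵀ * 1 * hA.sqrt) *ᵥ x := by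
        rw [Matrix.mul_one, hA.transpose_sqrt, hA.sqrt_mul_self]
    _ = (hA.sqrt *ᵥ x) ⬝ᵥ (hA.sqrt *ᵥ x) := by
        rw [dotProduct_transpose_mul_mul_mulVec, one_mulVec]

end Matrix

open Matrix

lemma tendsto_zero_of_dotProduct_self {ι n : Type*} [Fintype n] {l : Filter ι} {v : ι → n → ℝ}
    (hv : Tendsto (fun i => v i ⬝ᵥ v i) l (nhds 0)) : Tendsto v l (nhds 0) := by
  have hnorm : ∀ i, ‖WithLp.toLp 2 (v i)‖ = Real.sqrt (v i ⬝ᵥ v i) := fun i => by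
    simp [EuclideanSpace.norm_eq, dotProduct, sq]
  have : Tendsto (fun i => WithLp.toLp 2 (v i)) l (nhds 0) := by
    rw [tendsto_zero_iff_norm_tendsto_zero]
    simpa [hnorm, Function.comp_def] using (Real.continuous_sqrt.tendsto 0).comp hv
  simpa [Function.comp_def] using ((PiLp.continuous_ofLp 2 _).tendsto 0).comp this

lemma Matrix.PosDef.tendsto_zero_of_dotProduct_mulVec {ι n : Type*} [Fintype n] [DecidableEq n]
    {P : Matrix n n ℝ} (hP : P.PosDef) {l : Filter ι} {v : ι → n → ℝ}
    (hv : Tendsto (fun i => v i ⬝ᵥ P *ᵥ v i) l (nhds 0)) : Tendsto v l (nhds 0) := by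
  set R := hP.posSemidef.sqrt
  have hR : IsUnit R.det := by
    refine isUnit_iff_ne_zero.mpr fun h0 => hP.det_pos.ne' ?_
    rw [← hP.posSemidef.sqrt_mul_self, det_mul, h0, zero_mul]
  have hRv : Tendsto (fun i => R *ᵥ v i) l (nhds 0) :=
    tendsto_zero_of_dotProduct_self <| by
      simpa only [hP.posSemidef.dotProduct_mulVec_eq_sqrt] using hv
  have := ((continuous_const (y := R⁻¹).matrix_mulVec continuous_id).tendsto 0).comp hRv
  simpa [Function.comp_def, mulVec_mulVec, nonsing_inv_mul R hR] using this

section Lyapunov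

variable {d K : ℕ} {S : Fin K → Matrix (Fin d) (Fin d) ℝ} {P : Matrix (Fin d) (Fin d) ℝ}
  {σ : ℕ → Fin K}

lemma antitone_dotProduct_mulVec_prodsW (hL : ∀ k, (P - (S k)ᵀ * P * S k).PosSemidef)
    (x : Fin d → ℝ) :
    Antitone fun n => (prodsW S σ n *ᵥ x) ⬝ᵥ P *ᵥ (prodsW S σ n *ᵥ x) := by
  refine antitone_nat_of_succ_le fun n => ?_
  have h := (hL (σ n)).dotProduct_mulVec_nonneg (prodsW S σ n *ᵥ x)
  rw [star_trivial, sub_mulVec, dotProduct_sub, dotProduct_transpose_mul_mul_mulVec] at h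
  simpa only [prodsW, ← mulVec_mulVec, sub_nonneg] using h

lemma tendsto_dotProduct_mulVec_prodsW (hP : P.PosSemidef)
    (hL : ∀ k, (P - (S k)ᵀ * P * S k).PosSemidef) {M : Matrix (Fin d) (Fin d) ℝ}
    (hM : M ∈ omegaSet S σ) (x : Fin d → ℝ) :
    Tendsto (fun n => (prodsW S σ n *ᵥ x) ⬝ᵥ P *ᵥ (prodsW S σ n *ᵥ x)) atTop
      (nhds (x ⬝ᵥ (Mᵀ * P * M) *ᵥ x)) := by
  obtain ⟨φ, hφ, hlim⟩ := hM
  have hbdd : BddBelow (Set.range fun n => (prodsW S σ n *ᵥ x) ⬝ᵥ P *ᵥ (prodsW S σ n *ᵥ x)) :=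
    ⟨0, Set.forall_mem_range.mpr fun n => by
      simpa only [star_trivial] using hP.dotProduct_mulVec_nonneg (prodsW S σ n *ᵥ x)⟩
  have hconv := tendsto_atTop_ciInf (antitone_dotProduct_mulVec_prodsW hL x) hbdd
  have hcont : Continuous fun A : Matrix (Fin d) (Fin d) ℝ => (A *ᵥ x) ⬝ᵥ P *ᵥ (A *ᵥ x) := by
    fun_prop
  have hinf : ⨅ n, (prodsW S σ n *ᵥ x) ⬝ᵥ P *ᵥ (prodsW S σ n *ᵥ x) =
      (M *ᵥ x) ⬝ᵥ P *ᵥ (M *ᵥ x) :=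
    tendsto_nhds_unique (hconv.comp hφ.tendsto_atTop) ((hcont.tendsto M).comp hlim)
  rwa [dotProduct_transpose_mul_mul_mulVec, ← hinf]

end Lyapunov

theorem stmt12 {d K : ℕ} (S : Fin K → Matrix (Fin d) (Fin d) ℝ)
    (P : Matrix (Fin d) (Fin d) ℝ) (hP : P.PosDef)
    (hL : ∀ k, (P - (S k)ᵀ * P * S k).PosSemidef)
    (σ : ℕ → Fin K)
    (M : Matrix (Fin d) (Fin d) ℝ) (hM : M ∈ omegaSet S σ)
    (hpsd : (Mᵀ * P * M).PosSemidef) :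
    (∀ x₀ : Fin d → ℝ,
      Tendsto (fun n => Pnorm P ((prodsW S σ n).mulVec x₀)) atTop
        (nhds (Pnorm 1 (hpsd.sqrt.mulVec x₀)))) ∧
    (∀ x₀ : Fin d → ℝ,
      Tendsto (fun n => (prodsW S σ n).mulVec x₀) atTop (nhds 0) ↔
        hpsd.sqrt.mulVec x₀ = 0) ∧
    ((∀ x₀ : Fin d → ℝ,
      Tendsto (fun n => (prodsW S σ n).mulVec x₀) atTop (nhds 0)) ↔ hpsd.sqrt = 0) := by
  set Q := hpsd.sqrt
  have hquad (x₀ : Fin d → ℝ) : Tendsto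
      (fun n => (prodsW S σ n *ᵥ x₀) ⬝ᵥ P *ᵥ (prodsW S σ n *ᵥ x₀)) atTop
      (nhds ((Q *ᵥ x₀) ⬝ᵥ (Q *ᵥ x₀))) := by
    rw [← hpsd.dotProduct_mulVec_eq_sqrt]
    exact tendsto_dotProduct_mulVec_prodsW hP.posSemidef hL hM x₀
  have hkernel (x₀ : Fin d → ℝ) :
      Tendsto (fun n => prodsW S σ n *ᵥ x₀) atTop (nhds 0) ↔ Q *ᵥ x₀ = 0 := by
    rw [← dotProduct_self_eq_zero]
    refine ⟨fun h => tendsto_nhds_unique (hquad x₀) ?_,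
      fun h => hP.tendsto_zero_of_dotProduct_mulVec (h ▸ hquad x₀)⟩
    have hcont : Continuous fun v : Fin d → ℝ => v ⬝ᵥ P *ᵥ v := by fun_prop
    simpa [Function.comp_def] using (hcont.tendsto 0).comp h
  refine ⟨fun x₀ => ?_, hkernel, ?_⟩
  · simpa only [Pnorm, one_mulVec, Function.comp_def] using
      (Real.continuous_sqrt.tendsto _).comp (hquad x₀)
  · simp only [hkernel, ← mulVec_injective.eq_iff, funext_iff, zero_mulVec, Pi.zero_apply]
end

section
/- Let S₁, S₂ ∈ ℝ^{d×d} satisfy P - S_kᵀPS_k ≥ 0 (k = 1,2) for a common symmetric positive-definite P, with ‖S₁‖_P = ‖S₂‖_P = 1, and suppose K_P(S₁) ∩ K_P(S₂) = {0}, where K_P(S) = {x : ‖Sx‖_P = ‖x‖_P}. If additionally K_P(S₁) is S₁-invariant (or K_P(S₂) is S₂-invariant), then for every switching signal σ : ℕ → {1,2} in which both symbols occur infinitely often, S_{σ(n)}⋯S_{σ(1)}x₀ → 0 for every x₀ ∈ ℝ^d. -/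
/-!
Each `S k` is a contraction for `Pnorm P`, so `Pnorm P` decreases along the orbit to a limit `L`.
Since the signal switches infinitely often from `a` to `b`, some subsequence of times `n` with
`σ n = a`, `σ (n + 1) = b` makes the orbit converge to a point `y`, and then `y`, `S a y` and
`S b (S a y)` all have norm `L`. So `y ∈ K_P(S a)`, whence `S a y ∈ K_P(S a)` by invariance, and
`S a y ∈ K_P(S b)`; therefore `S a y = 0` and `L = 0`.
-/

open Matrix Filter
open scoped ENNReal

open Topology

/-- The paper's `K_P(A)`. -/
def normPreservingSet {d : ℕ} (P A : Matrix (Fin d) (Fin d) ℝ) : Set (Fin d → ℝ) :=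
  {x | Pnorm P (A *ᵥ x) = Pnorm P x}

lemma Nat.frequently_and_not_succ {p : ℕ → Prop} (hp : ∃ᶠ n in atTop, p n)
    (hnp : ∃ᶠ n in atTop, ¬ p n) : ∃ᶠ n in atTop, p n ∧ ¬ p (n + 1) := by
  rw [frequently_atTop] at *
  intro N
  obtain ⟨n, hNn, hpn⟩ := hp N
  by_contra! h
  have hall : ∀ m ≥ n, p m := fun m hm =>
    Nat.le_induction hpn (fun k hk hpk => h k (hNn.trans hk) hpk) m hm
  obtain ⟨m, hm, hpm⟩ := hnp n
  exact hpm (hall m hm)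

lemma frequently_eq_and_succ_eq_of_fin_two {σ : ℕ → Fin 2} (hσ : ∀ k, ∃ᶠ n in atTop, σ n = k)
    {a b : Fin 2} (hab : a ≠ b) : ∃ᶠ n in atTop, σ n = a ∧ σ (n + 1) = b := by
  have hne : ∀ c : Fin 2, ¬ c = a ↔ c = b := by omega
  simpa only [hne] using Nat.frequently_and_not_succ (hσ a) ((hσ b).mono fun n => (hne _).2)

lemma exists_pos_mul_norm_le_of_homogeneous {E : Type*} [NormedAddCommGroup E] [NormedSpace ℝ E]
    [FiniteDimensional ℝ E] {f : E → ℝ} (hf : Continuous f)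
    (hsmul : ∀ (r : ℝ) v, f (r • v) = |r| * f v) (hpos : ∀ v ≠ 0, 0 < f v) :
    ∃ c > 0, ∀ v, c * ‖v‖ ≤ f v := by
  have hf0 : f 0 = 0 := by simpa using hsmul 0 0
  rcases subsingleton_or_nontrivial E with hE | hE
  · exact ⟨1, one_pos, fun v => by simp [Subsingleton.elim v 0, hf0]⟩
  obtain ⟨u, hu, hmin⟩ := (isCompact_sphere (0 : E) 1).exists_isMinOn
    (NormedSpace.sphere_nonempty.2 zero_le_one) hf.continuousOn
  refine ⟨f u, hpos u (ne_zero_of_mem_unit_sphere ⟨u, hu⟩), fun v => ?_⟩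
  rcases eq_or_ne v 0 with rfl | hv
  · simp [hf0]
  have hv' : 0 < ‖v‖ := norm_pos_iff.2 hv
  have hmem : ‖v‖⁻¹ • v ∈ Metric.sphere (0 : E) 1 := by
    simp [norm_smul, inv_mul_cancel₀ hv'.ne']
  have : f u ≤ f (‖v‖⁻¹ • v) := hmin hmem
  rw [hsmul, abs_of_pos (inv_pos.2 hv')] at this
  exact mul_comm (f u) _ ▸ (le_inv_mul_iff₀ hv').1 this

section Pnorm

variable {d : ℕ} {P : Matrix (Fin d) (Fin d) ℝ}

lemma Pnorm_nonneg (P : Matrix (Fin d) (Fin d) ℝ) (x : Fin d → ℝ) : 0 ≤ Pnorm P x :=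
  Real.sqrt_nonneg _

@[simp]
lemma Pnorm_zero (P : Matrix (Fin d) (Fin d) ℝ) : Pnorm P 0 = 0 := by
  simp [Pnorm]

lemma continuous_Pnorm (P : Matrix (Fin d) (Fin d) ℝ) : Continuous (Pnorm P) :=
  Real.continuous_sqrt.comp (continuous_id.dotProduct (continuous_const.matrix_mulVec continuous_id))

lemma Pnorm_smul (P : Matrix (Fin d) (Fin d) ℝ) (r : ℝ) (x : Fin d → ℝ) :
    Pnorm P (r • x) = |r| * Pnorm P x := by
  rw [Pnorm, Pnorm, mulVec_smul, dotProduct_smul, smul_dotProduct, smul_eq_mul, smul_eq_mul,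
    ← mul_assoc, Real.sqrt_mul (mul_self_nonneg r), Real.sqrt_mul_self_eq_abs]

lemma Pnorm_pos (hP : P.PosDef) {x : Fin d → ℝ} (hx : x ≠ 0) : 0 < Pnorm P x :=
  Real.sqrt_pos.2 (by simpa using hP.re_dotProduct_pos hx)

lemma Pnorm_mulVec_le_of_posSemidef {A : Matrix (Fin d) (Fin d) ℝ}
    (h : (P - Aᵀ * P * A).PosSemidef) (x : Fin d → ℝ) : Pnorm P (A *ᵥ x) ≤ Pnorm P x := by
  refine Real.sqrt_le_sqrt ?_
  have hquad : x ⬝ᵥ (Aᵀ * P * A) *ᵥ x = A *ᵥ x ⬝ᵥ P *ᵥ (A *ᵥ x) := by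
    rw [← mulVec_mulVec, ← mulVec_mulVec, dotProduct_mulVec, vecMul_transpose]
  have := h.re_dotProduct_nonneg x
  simp only [star_trivial, sub_mulVec, dotProduct_sub, RCLike.re_to_real, hquad] at this
  linarith

lemma exists_pos_mul_norm_le_Pnorm (hP : P.PosDef) : ∃ c > 0, ∀ v, c * ‖v‖ ≤ Pnorm P v :=
  exists_pos_mul_norm_le_of_homogeneous (continuous_Pnorm P) (Pnorm_smul P) fun _ => Pnorm_pos hP

lemma isBounded_setOf_Pnorm_le (hP : P.PosDef) (r : ℝ) :
    Bornology.IsBounded {v | Pnorm P v ≤ r} := by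
  obtain ⟨c, hc, hle⟩ := exists_pos_mul_norm_le_Pnorm hP
  exact isBounded_iff_forall_norm_le.2
    ⟨r / c, fun v hv => (le_div_iff₀' hc).2 ((hle v).trans hv)⟩

lemma tendsto_zero_of_tendsto_Pnorm_zero (hP : P.PosDef) {ι : Type*} {l : Filter ι}
    {x : ι → Fin d → ℝ} (h : Tendsto (fun i => Pnorm P (x i)) l (𝓝 0)) : Tendsto x l (𝓝 0) := by
  obtain ⟨c, hc, hle⟩ := exists_pos_mul_norm_le_Pnorm hP
  rw [tendsto_zero_iff_norm_tendsto_zero]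
  refine squeeze_zero (fun _ => norm_nonneg _) (fun i => ?_) (by simpa using h.div_const c)
  exact (le_div_iff₀' hc).2 (hle _)

end Pnorm

section Switching

variable {d K : ℕ} {P : Matrix (Fin d) (Fin d) ℝ} {S : Fin K → Matrix (Fin d) (Fin d) ℝ}

lemma prodsW_succ_mulVec (S : Fin K → Matrix (Fin d) (Fin d) ℝ) (σ : ℕ → Fin K) (n : ℕ)
    (x : Fin d → ℝ) : prodsW S σ (n + 1) *ᵥ x = S (σ n) *ᵥ (prodsW S σ n *ᵥ x) := by
  rw [prodsW, mulVec_mulVec]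

lemma antitone_Pnorm_prodsW_mulVec (hS : ∀ k v, Pnorm P (S k *ᵥ v) ≤ Pnorm P v)
    (σ : ℕ → Fin K) (x : Fin d → ℝ) : Antitone fun n => Pnorm P (prodsW S σ n *ᵥ x) :=
  antitone_nat_of_succ_le fun n => by rw [prodsW_succ_mulVec]; exact hS _ _

theorem tendsto_prodsW_mulVec_zero (hP : P.PosDef) (hS : ∀ k v, Pnorm P (S k *ᵥ v) ≤ Pnorm P v)
    {a b : Fin K} (hinv : ∀ x ∈ normPreservingSet P (S a), S a *ᵥ x ∈ normPreservingSet P (S a))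
    (hcap : normPreservingSet P (S a) ∩ normPreservingSet P (S b) = {0})
    {σ : ℕ → Fin K} (hσ : ∃ᶠ n in atTop, σ n = a ∧ σ (n + 1) = b) (x₀ : Fin d → ℝ) :
    Tendsto (fun n => prodsW S σ n *ᵥ x₀) atTop (𝓝 0) := by
  set x := fun n => prodsW S σ n *ᵥ x₀
  have hanti := antitone_Pnorm_prodsW_mulVec hS σ x₀
  set L := ⨅ n, Pnorm P (x n)
  have hL : Tendsto (fun n => Pnorm P (x n)) atTop (𝓝 L) :=
    tendsto_atTop_ciInf hanti ⟨0, Set.forall_mem_range.2 fun n => Pnorm_nonneg P _⟩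
  have norm_of_limit {f : ℕ → ℕ} {z : Fin d → ℝ} (hf : Tendsto f atTop atTop)
      (hz : Tendsto (x ∘ f) atTop (𝓝 z)) : Pnorm P z = L :=
    tendsto_nhds_unique (((continuous_Pnorm P).tendsto z).comp hz) (hL.comp hf)
  have step {f : ℕ → ℕ} {k : Fin K} {z : Fin d → ℝ} (hfk : ∀ i, σ (f i) = k)
      (hz : Tendsto (x ∘ f) atTop (𝓝 z)) : Tendsto (x ∘ (· + 1) ∘ f) atTop (𝓝 (S k *ᵥ z)) := by
    have hcont : Continuous (S k *ᵥ ·) := continuous_const.matrix_mulVec continuous_id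
    refine ((hcont.tendsto z).comp hz).congr fun i => ?_
    simp [x, prodsW_succ_mulVec, hfk]
  obtain ⟨φ, hφ, hφσ⟩ := extraction_of_frequently_atTop hσ
  obtain ⟨y, -, ψ, hψ, hy⟩ := tendsto_subseq_of_bounded
    (isBounded_setOf_Pnorm_le hP (Pnorm P (x 0))) fun i => hanti (Nat.zero_le (φ i))
  have hτ : Tendsto (φ ∘ ψ) atTop atTop := (hφ.comp hψ).tendsto_atTop
  have hτ₁ : Tendsto ((· + 1) ∘ φ ∘ ψ) atTop atTop := (tendsto_add_atTop_nat 1).comp hτ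
  have hy₁ := step (fun i => (hφσ (ψ i)).1) hy
  have hy₂ := step (f := (· + 1) ∘ φ ∘ ψ) (fun i => (hφσ (ψ i)).2) hy₁
  have hy_mem : y ∈ normPreservingSet P (S a) :=
    (norm_of_limit hτ₁ hy₁).trans (norm_of_limit hτ hy).symm
  have hSy_mem : S a *ᵥ y ∈ normPreservingSet P (S b) :=
    (norm_of_limit ((tendsto_add_atTop_nat 1).comp hτ₁) hy₂).trans (norm_of_limit hτ₁ hy₁).symm
  have hSy : S a *ᵥ y ∈ normPreservingSet P (S a) ∩ normPreservingSet P (S b) :=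
    ⟨hinv y hy_mem, hSy_mem⟩
  rw [hcap, Set.mem_singleton_iff] at hSy
  have hL0 : L = 0 := by rw [← norm_of_limit hτ₁ hy₁, hSy, Pnorm_zero]
  exact tendsto_zero_of_tendsto_Pnorm_zero hP (hL0 ▸ hL)

end Switching

theorem stmt18_general {d : ℕ} (S : Fin 2 → Matrix (Fin d) (Fin d) ℝ)
    (P : Matrix (Fin d) (Fin d) ℝ) (hP : P.PosDef)
    (hL : ∀ k, (P - (S k)ᵀ * P * S k).PosSemidef)
    (hcap : {x : Fin d → ℝ | Pnorm P ((S 0).mulVec x) = Pnorm P x} ∩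
        {x : Fin d → ℝ | Pnorm P ((S 1).mulVec x) = Pnorm P x} = {0})
    (hinv : (∀ x : Fin d → ℝ, Pnorm P ((S 0).mulVec x) = Pnorm P x →
        Pnorm P ((S 0).mulVec ((S 0).mulVec x)) = Pnorm P ((S 0).mulVec x)) ∨
      (∀ x : Fin d → ℝ, Pnorm P ((S 1).mulVec x) = Pnorm P x →
        Pnorm P ((S 1).mulVec ((S 1).mulVec x)) = Pnorm P ((S 1).mulVec x))) :
    ∀ σ : ℕ → Fin 2, (∀ k : Fin 2, ∀ N : ℕ, ∃ n : ℕ, N ≤ n ∧ σ n = k) →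
      ∀ x₀ : Fin d → ℝ,
        Tendsto (fun n => (prodsW S σ n).mulVec x₀) atTop (nhds 0) := by
  intro σ hσ x₀
  have hS k v := Pnorm_mulVec_le_of_posSemidef (hL k) v
  have hfreq k : ∃ᶠ n in atTop, σ n = k := frequently_atTop.2 (hσ k)
  rcases hinv with hinv | hinv
  · exact tendsto_prodsW_mulVec_zero hP hS hinv hcap
      (frequently_eq_and_succ_eq_of_fin_two hfreq zero_ne_one) x₀
  · exact tendsto_prodsW_mulVec_zero hP hS hinv (Set.inter_comm _ _ ▸ hcap)
      (frequently_eq_and_succ_eq_of_fin_two hfreq one_ne_zero) x₀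

theorem stmt18 {d : ℕ} (S : Fin 2 → Matrix (Fin d) (Fin d) ℝ)
    (P : Matrix (Fin d) (Fin d) ℝ) (hP : P.PosDef)
    (hL : ∀ k, (P - (S k)ᵀ * P * S k).PosSemidef)
    (hop : PopNorm P (S 0) = 1 ∧ PopNorm P (S 1) = 1)
    (hcap : {x : Fin d → ℝ | Pnorm P ((S 0).mulVec x) = Pnorm P x} ∩
        {x : Fin d → ℝ | Pnorm P ((S 1).mulVec x) = Pnorm P x} = {0})
    (hinv : (∀ x : Fin d → ℝ, Pnorm P ((S 0).mulVec x) = Pnorm P x →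
        Pnorm P ((S 0).mulVec ((S 0).mulVec x)) = Pnorm P ((S 0).mulVec x)) ∨
      (∀ x : Fin d → ℝ, Pnorm P ((S 1).mulVec x) = Pnorm P x →
        Pnorm P ((S 1).mulVec ((S 1).mulVec x)) = Pnorm P ((S 1).mulVec x))) :
    ∀ σ : ℕ → Fin 2, (∀ k : Fin 2, ∀ N : ℕ, ∃ n : ℕ, N ≤ n ∧ σ n = k) →
      ∀ x₀ : Fin d → ℝ,
        Tendsto (fun n => (prodsW S σ n).mulVec x₀) atTop (nhds 0) :=
  stmt18_general S P hP hL hcap hinv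
end

section
/- Let S₁ = (1/2)·[[1,0],[3/2,−1]] and S₂ = √((3−√5)/2)·[[1,1],[0,1]]. Then ρ(S₁) = 1/2 < 1, ρ(S₂) = √((3−√5)/2) < 1, ρ(S₁S₂) = √((3−√5)/2) < 1, and ‖S₁‖₂ = ‖S₂‖₂ = 1; consequently the switched system {S₁,S₂} is absolutely stable. -/
open Matrix Filter
open scoped ENNReal

noncomputable def cg : ℝ := Real.sqrt ((3 - Real.sqrt 5) / 2)

noncomputable def R1 : Matrix (Fin 2) (Fin 2) ℝ := (1 / 2 : ℝ) • !![1, 0; 3 / 2, -1]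
noncomputable def R2 : Matrix (Fin 2) (Fin 2) ℝ := cg • !![1, 1; 0, 1]

/-!
The spectral radii are read off from trace and determinant, since all three matrices have real
eigenvalues. The key number is `cg = (√5 - 1) / 2`, the root of `t² + t = 1`. The Euclidean norm
of each `Sᵢ` is `1` because `|x|² - |Sᵢ x|²` is a nonnegative multiple of a square that vanishes
for some `x ≠ 0`. For absolute stability, every product of three factors has Frobenius norm at
most `19 / 20`. The Frobenius norm is submultiplicative, so every switched product decays
geometrically.
-/

open scoped Matrix.Norms.Frobenius

theorem Matrix.spectrum_fin_two_eq_pair {K : Type*} [Field K] (M : Matrix (Fin 2) (Fin 2) K)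
    {a b : K} (htr : M.trace = a + b) (hdet : M.det = a * b) : spectrum K M = {a, b} := by
  ext z
  have hchar : (algebraMap K _ z - M).det = (z - a) * (z - b) := by
    rw [trace_fin_two] at htr
    rw [det_fin_two] at hdet ⊢
    simp [algebraMap_eq_diagonal]
    linear_combination (-z) * htr + hdet
  rw [spectrum.mem_iff, isUnit_iff_isUnit_det, isUnit_iff_ne_zero, not_not, hchar,
    mul_eq_zero, sub_eq_zero, sub_eq_zero, Set.mem_insert_iff, Set.mem_singleton_iff]

theorem specRad_fin_two_of_trace_of_det (A : Matrix (Fin 2) (Fin 2) ℝ) {a b : ℝ}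
    (htr : A.trace = a + b) (hdet : A.det = a * b) :
    specRad A = ENNReal.ofReal (max |a| |b|) := by
  have hspec : spectrum ℂ (A.map Complex.ofReal) = {(a : ℂ), (b : ℂ)} := by
    apply spectrum_fin_two_eq_pair
    · rw [trace_fin_two] at htr
      simp only [trace_fin_two, map_apply]
      exact_mod_cast htr
    · exact (Complex.ofRealHom.map_det A).symm.trans (by simp [hdet])
  rw [specRad, spectralRadius, hspec, iSup_pair, ENNReal.ofReal_max]
  simp [← ENNReal.ofReal_coe_nnreal]

theorem Pnorm_one_eq {d : ℕ} (x : Fin d → ℝ) : Pnorm 1 x = √(x ⬝ᵥ x) := by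
  rw [Pnorm, one_mulVec]

theorem PopNorm_one_eq {d : ℕ} (A : Matrix (Fin d) (Fin d) ℝ) {c : ℝ} (hc : 0 ≤ c)
    (hle : ∀ x, A *ᵥ x ⬝ᵥ A *ᵥ x ≤ c ^ 2 * (x ⬝ᵥ x))
    {x₀ : Fin d → ℝ} (hx₀ : x₀ ≠ 0) (heq : A *ᵥ x₀ ⬝ᵥ A *ᵥ x₀ = c ^ 2 * (x₀ ⬝ᵥ x₀)) :
    PopNorm 1 A = c := by
  have hscale : ∀ (t : ℝ) (x : Fin d → ℝ), Pnorm 1 (t • x) = |t| * Pnorm 1 x := by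
    intro t x
    rw [Pnorm_one_eq, Pnorm_one_eq, smul_dotProduct, dotProduct_smul, smul_smul, smul_eq_mul,
      Real.sqrt_mul (mul_self_nonneg t), Real.sqrt_mul_self_eq_abs]
  have hbound : ∀ x, Pnorm 1 (A *ᵥ x) ≤ c * Pnorm 1 x := by
    intro x
    rw [Pnorm_one_eq, Pnorm_one_eq, ← Real.sqrt_sq hc, ← Real.sqrt_mul (sq_nonneg c)]
    exact Real.sqrt_le_sqrt (hle x)
  have hattain : Pnorm 1 (A *ᵥ x₀) = c * Pnorm 1 x₀ := by
    rw [Pnorm_one_eq, Pnorm_one_eq, heq, Real.sqrt_mul (sq_nonneg c), Real.sqrt_sq hc]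
  have hpos : 0 < Pnorm 1 x₀ := by
    rw [Pnorm_one_eq, Real.sqrt_pos]
    simpa using (dotProduct_self_star_pos_iff (v := x₀)).2 hx₀
  refine IsGreatest.csSup_eq ⟨⟨(Pnorm 1 x₀)⁻¹ • x₀, ?_, ?_⟩, ?_⟩
  · simp only [Set.mem_ofPred_eq, hscale, abs_inv, abs_of_pos hpos]
    exact inv_mul_cancel₀ hpos.ne'
  · simp only [mulVec_smul, hscale, hattain, abs_inv, abs_of_pos hpos]
    field_simp
  · rintro _ ⟨x, hx, rfl⟩
    simpa [show Pnorm 1 x = 1 from hx] using hbound x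

theorem cg_eq : cg = (√5 - 1) / 2 := by
  have h5 : √5 ^ 2 = 5 := Real.sq_sqrt (by norm_num)
  have h1 : 1 ≤ √5 := Real.one_le_sqrt.2 (by norm_num)
  rw [cg, show (3 - √5) / 2 = ((√5 - 1) / 2) ^ 2 by linear_combination (-1/4 : ℝ) * h5,
    Real.sqrt_sq (by linarith)]

theorem cg_sq_add_cg : cg ^ 2 + cg = 1 := by
  rw [cg_eq]
  linear_combination (1/4 : ℝ) * Real.sq_sqrt (show (0:ℝ) ≤ 5 by norm_num)

theorem cg_pos : 0 < cg := by
  rw [cg_eq]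
  linarith [Real.lt_sqrt (x := 1) (y := 5) zero_le_one |>.2 (by norm_num)]

theorem cg_bounds : 0.61 < cg ∧ cg < 0.62 := by
  constructor <;> nlinarith [cg_sq_add_cg, cg_pos]

theorem cg_lt_one : cg < 1 := by linarith [cg_bounds.2]

theorem R1_eq : R1 = !![1 / 2, 0; 3 / 4, -(1 / 2)] := by
  rw [R1, smul_of, smul_cons]; norm_num

theorem R2_eq : R2 = !![cg, cg; 0, cg] := by
  rw [R2, smul_of, smul_cons]; simp

theorem specRad_R1 : specRad R1 = ENNReal.ofReal (1 / 2) := by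
  rw [specRad_fin_two_of_trace_of_det R1 (a := 1 / 2) (b := -(1 / 2))] <;>
    simp [R1_eq, trace_fin_two, det_fin_two]

theorem specRad_R2 : specRad R2 = ENNReal.ofReal cg := by
  rw [specRad_fin_two_of_trace_of_det R2 (a := cg) (b := cg)] <;>
    simp [R2_eq, trace_fin_two, det_fin_two, abs_of_pos cg_pos]

theorem specRad_R1_mul_R2 : specRad (R1 * R2) = ENNReal.ofReal cg := by
  rw [specRad_fin_two_of_trace_of_det (R1 * R2) (a := cg) (b := -(cg / 4))]
  · rw [abs_neg, abs_of_pos cg_pos, abs_of_pos (by linarith [cg_pos]),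
      max_eq_left (by linarith [cg_pos])]
  · simp [R1_eq, R2_eq, trace_fin_two]; ring
  · simp [R1_eq, R2_eq, det_fin_two]; ring

theorem PopNorm_one_R1 : PopNorm 1 R1 = 1 := by
  have gap : ∀ x, x ⬝ᵥ x - R1 *ᵥ x ⬝ᵥ R1 *ᵥ x = 3 / 16 * (x 0 + 2 * x 1) ^ 2 := by
    intro x; simp [R1_eq, dotProduct, Fin.sum_univ_two]; ring
  refine PopNorm_one_eq R1 zero_le_one (fun x => ?_) (x₀ := ![-2, 1]) (by simp) ?_
  · nlinarith [gap x, sq_nonneg (x 0 + 2 * x 1)]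
  · have := gap ![-2, 1]; simp at this ⊢; linarith

theorem PopNorm_one_R2 : PopNorm 1 R2 = 1 := by
  have gap : ∀ x, x ⬝ᵥ x - R2 *ᵥ x ⬝ᵥ R2 *ᵥ x = cg * (x 0 - cg * x 1) ^ 2 := by
    intro x; simp [R2_eq, dotProduct, Fin.sum_univ_two]
    linear_combination (-(x 0 ^ 2 + (cg + 1) * x 1 ^ 2)) * cg_sq_add_cg
  refine PopNorm_one_eq R2 zero_le_one (fun x => ?_) (x₀ := ![cg, 1]) (by simp) ?_
  · nlinarith [gap x, mul_nonneg cg_pos.le (sq_nonneg (x 0 - cg * x 1))]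
  · have := gap ![cg, 1]; simp at this ⊢; linarith

theorem prodsW_add {d K : ℕ} (S : Fin K → Matrix (Fin d) (Fin d) ℝ) (σ : ℕ → Fin K) (m n : ℕ) :
    prodsW S σ (m + n) = prodsW S (fun i => σ (m + i)) n * prodsW S σ m := by
  induction n with
  | zero => simp [prodsW]
  | succ n ih => rw [← add_assoc, prodsW, prodsW, ih, mul_assoc]

theorem tendsto_zero_of_add_le_mul {a : ℕ → ℝ} {k : ℕ} {q : ℝ} (hk : 0 < k) (hq₀ : 0 ≤ q)
    (hq : q < 1) (ha : ∀ n, 0 ≤ a n) (hstep : ∀ n, a (n + k) ≤ q * a n) :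
    Tendsto a atTop (nhds 0) := by
  have hblock : ∀ m r, a (k * m + r) ≤ q ^ m * a r := by
    intro m r
    induction m with
    | zero => simp
    | succ m ih =>
      calc a (k * (m + 1) + r) = a (k * m + r + k) := by ring_nf
        _ ≤ q * a (k * m + r) := hstep _
        _ ≤ q * (q ^ m * a r) := by gcongr
        _ = q ^ (m + 1) * a r := by ring
  set B := ∑ r ∈ Finset.range k, a r
  have hbound : ∀ n, a n ≤ q ^ (n / k) * B := by
    intro n
    calc a n = a (k * (n / k) + n % k) := by rw [Nat.div_add_mod]
      _ ≤ q ^ (n / k) * a (n % k) := hblock _ _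
      _ ≤ q ^ (n / k) * B := by
        gcongr
        exact Finset.single_le_sum (fun r _ => ha r) (Finset.mem_range.2 (Nat.mod_lt n hk))
  have hlim : Tendsto (fun n => q ^ (n / k) * B) atTop (nhds 0) := by
    simpa using ((tendsto_pow_atTop_nhds_zero_of_lt_one hq₀ hq).comp
      (Nat.tendsto_div_const_atTop hk.ne')).mul_const B
  exact squeeze_zero ha hbound hlim

theorem tendsto_prodsW_zero {d K : ℕ} (S : Fin K → Matrix (Fin d) (Fin d) ℝ) {k : ℕ} {q : ℝ}
    (hk : 0 < k) (hq : q < 1) (hwords : ∀ τ, ‖prodsW S τ k‖ ≤ q) (σ : ℕ → Fin K) :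
    Tendsto (prodsW S σ) atTop (nhds 0) := by
  have hq₀ : 0 ≤ q := (norm_nonneg _).trans (hwords σ)
  refine tendsto_zero_iff_norm_tendsto_zero.2 (tendsto_zero_of_add_le_mul hk hq₀ hq
    (fun n => norm_nonneg _) fun n => ?_)
  rw [prodsW_add]
  exact (norm_mul_le _ _).trans (by gcongr; exact hwords _)

theorem frobenius_norm_fin_two (A : Matrix (Fin 2) (Fin 2) ℝ) :
    ‖A‖ = √(A 0 0 ^ 2 + A 0 1 ^ 2 + A 1 0 ^ 2 + A 1 1 ^ 2) := by
  rw [frobenius_norm_def, Real.sqrt_eq_rpow]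
  simp [Fin.sum_univ_two, add_assoc]

theorem norm_prodsW_three_le (τ : ℕ → Fin 2) : ‖prodsW ![R1, R2] τ 3‖ ≤ 19 / 20 := by
  have hc := cg_sq_add_cg
  -- the word `R2 * R2 * R2` has entries that are multiples of `cg ^ 3`
  have hc6 : cg ^ 6 = 5 - 8 * cg := by
    linear_combination (cg ^ 4 - cg ^ 3 + 2 * cg ^ 2 - 3 * cg + 5) * hc
  have ⟨hlo, hhi⟩ := cg_bounds
  simp only [prodsW, mul_one]
  rw [frobenius_norm_fin_two, Real.sqrt_le_left (by norm_num)]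
  generalize τ 0 = i, τ 1 = j, τ 2 = l
  fin_cases i <;> fin_cases j <;> fin_cases l <;> simp [R1_eq, R2_eq] <;> ring_nf <;> nlinarith

theorem stmt19 :
    specRad R1 = ENNReal.ofReal (1 / 2) ∧ ENNReal.ofReal (1 / 2 : ℝ) < 1 ∧
    specRad R2 = ENNReal.ofReal cg ∧ ENNReal.ofReal cg < 1 ∧
    specRad (R1 * R2) = ENNReal.ofReal cg ∧
    PopNorm 1 R1 = 1 ∧ PopNorm 1 R2 = 1 ∧
    ∀ σ : ℕ → Fin 2, Tendsto (fun n => prodsW ![R1, R2] σ n) atTop (nhds 0) :=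
  ⟨specRad_R1, by norm_num, specRad_R2, ENNReal.ofReal_lt_one.2 cg_lt_one, specRad_R1_mul_R2,
    PopNorm_one_R1, PopNorm_one_R2,
    tendsto_prodsW_zero _ three_pos (by norm_num) norm_prodsW_three_le⟩
end
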